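/- Let n = (n_x, n_t) ∈ ℝ^d × ℝ be a unit vector, let u⁺, u⁻ ∈ ℝ^d and p⁺, p⁻ ∈ ℝ satisfy (i) u⁺·n_x = u⁻·n_x and (ii) u⁺(u⁺·n_x) + p⁺ n_x + u⁺ n_t = u⁻(u⁻·n_x) + p⁻ n_x + u⁻ n_t. Then (|u⁺|²/2 + p⁺)(u⁺·n_x) + (|u⁺|²/2) n_t = (|u⁻|²/2 + p⁻)(u⁻·n_x) + (|u⁻|²/2) n_t. -/
import Mathlib


open scoped RealInnerProductSpace

/-- Pointwise Rankine–Hugoniot-type computation. If `n = (n_x, n_t)` is a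
unit vector, the normal components of `u⁺, u⁻` agree, and the momentum flux does not jump,
then the energy flux does not jump. -/
theorem stmt15 {d : ℕ} (nx : EuclideanSpace ℝ (Fin d)) (nt : ℝ)
    (hn : ‖nx‖ ^ 2 + nt ^ 2 = 1)
    (up um : EuclideanSpace ℝ (Fin d)) (pp pm : ℝ)
    (h1 : ⟪up, nx⟫ = ⟪um, nx⟫)
    (h2 : ⟪up, nx⟫ • up + pp • nx + nt • up = ⟪um, nx⟫ • um + pm • nx + nt • um) :
    (‖up‖ ^ 2 / 2 + pp) * ⟪up, nx⟫ + (‖up‖ ^ 2 / 2) * nt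
      = (‖um‖ ^ 2 / 2 + pm) * ⟪um, nx⟫ + (‖um‖ ^ 2 / 2) * nt := by
  have hc1 : ⟪up, um⟫ = ⟪um, up⟫ := real_inner_comm _ _
  have hc2 : ⟪nx, up⟫ = ⟪um, nx⟫ := by rw [real_inner_comm, h1]
  have hc3 : ⟪nx, um⟫ = ⟪um, nx⟫ := real_inner_comm _ _
  have e1 : (pp - pm) * ‖nx‖ ^ 2 = 0 := by
    have h := congrArg (fun v => ⟪v, nx⟫) h2
    simp only [inner_add_left, real_inner_smul_left, real_inner_self_eq_norm_sq] at h
    rw [h1] at h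
    linear_combination h
  have e2 : ⟪um, nx⟫ * ‖up‖ ^ 2 + pp * ⟪um, nx⟫ + nt * ‖up‖ ^ 2
      = ⟪um, nx⟫ * ⟪um, up⟫ + pm * ⟪um, nx⟫ + nt * ⟪um, up⟫ := by
    have h := congrArg (fun v => ⟪v, up⟫) h2
    simp only [inner_add_left, real_inner_smul_left, real_inner_self_eq_norm_sq] at h
    rw [h1, hc2] at h
    linear_combination h
  have e3 : ⟪um, nx⟫ * ⟪um, up⟫ + pp * ⟪um, nx⟫ + nt * ⟪um, up⟫
      = ⟪um, nx⟫ * ‖um‖ ^ 2 + pm * ⟪um, nx⟫ + nt * ‖um‖ ^ 2 := by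
    have h := congrArg (fun v => ⟪v, um⟫) h2
    simp only [inner_add_left, real_inner_smul_left, real_inner_self_eq_norm_sq] at h
    rw [h1, hc3, hc1] at h
    linear_combination h
  have e23 : (⟪um, nx⟫ + nt) * (‖up‖ ^ 2 + ‖um‖ ^ 2 - 2 * ⟪um, up⟫) = 0 := by
    linear_combination e2 - e3
  have hcs1 : ⟪um, nx⟫ * ⟪um, nx⟫ ≤ ‖um‖ ^ 2 * ‖nx‖ ^ 2 := by
    have := real_inner_mul_inner_self_le um nx
    rwa [real_inner_self_eq_norm_sq, real_inner_self_eq_norm_sq] at this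
  have hcs2 : ⟪um, up⟫ * ⟪um, up⟫ ≤ ‖um‖ ^ 2 * ‖up‖ ^ 2 := by
    have := real_inner_mul_inner_self_le um up
    rwa [real_inner_self_eq_norm_sq, real_inner_self_eq_norm_sq] at this
  -- (pp - pm) * s = 0
  have hps : (pp - pm) * ⟪um, nx⟫ = 0 := by
    have z : ‖um‖ ^ 2 * (pp - pm) * ((pp - pm) * ‖nx‖ ^ 2) = 0 := by rw [e1]; ring
    have h0 : ((pp - pm) * ⟪um, nx⟫) ^ 2 ≤ 0 := by
      nlinarith [hcs1, sq_nonneg (pp - pm), z]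
    have h1' : ((pp - pm) * ⟪um, nx⟫) ^ 2 = 0 :=
      le_antisymm h0 (sq_nonneg _)
    exact pow_eq_zero_iff (two_ne_zero) |>.mp h1'
  -- (s + nt) * (‖up‖² - ‖um‖²) = 0
  have ht : (⟪um, nx⟫ + nt) * (‖up‖ ^ 2 - ‖um‖ ^ 2) = 0 := by
    have key : ((⟪um, nx⟫ + nt) * (‖up‖ ^ 2 - ‖um‖ ^ 2)) ^ 2
        = (⟪um, nx⟫ + nt) * ((⟪um, nx⟫ + nt) * (‖up‖ ^ 2 + ‖um‖ ^ 2 - 2 * ⟪um, up⟫))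
            * (‖up‖ ^ 2 + ‖um‖ ^ 2 + 2 * ⟪um, up⟫)
          + (⟪um, nx⟫ + nt) ^ 2 * (4 * (⟪um, up⟫ * ⟪um, up⟫) - 4 * (‖um‖ ^ 2 * ‖up‖ ^ 2)) := by
      ring
    rw [e23] at key
    have h0 : ((⟪um, nx⟫ + nt) * (‖up‖ ^ 2 - ‖um‖ ^ 2)) ^ 2 ≤ 0 := by
      nlinarith [key, sq_nonneg (⟪um, nx⟫ + nt), hcs2]
    have h1' : ((⟪um, nx⟫ + nt) * (‖up‖ ^ 2 - ‖um‖ ^ 2)) ^ 2 = 0 :=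
      le_antisymm h0 (sq_nonneg _)
    exact pow_eq_zero_iff (two_ne_zero) |>.mp h1'
  rw [h1]
  linear_combination ht / 2 + hps
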